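/- (Weighted Wirtinger inequality.) For every h ∈ E, F(h) = ∫₀^{π/2} (h(t)² − (1/2) h'(t)²) cos t dt ≤ 0. -/

import Mathlib

/-!
Completing the square with `G t = -(h t * cos t) ^ 2 / (2 * sin t)` gives
`G' = (h ^ 2 - h' ^ 2 / 2) * cos + (h' - h * cos / sin) ^ 2 * cos / 2`, so on `(0, b)` with
`b ≤ π / 2` the integrand is bounded by `G'`. Since `h 0 = 0` and `h` is differentiable at `0`,
`h t / t` stays bounded, so `G t → 0` as `t → 0⁺`; hence the integral over `[0, b]` is at most
`G b ≤ 0`.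
-/

open Real MeasureTheory Set

/-- `h` belongs to the class `E` of functions of class `C^{1,1}` on `[0, π/2]`
(continuously differentiable with Lipschitz continuous derivative) satisfying
`h 0 = 0` and `h' (π/2) = 0`; the function `h'` is the derivative of `h` on `[0, π/2]`. -/
structure MemE (h h' : ℝ → ℝ) : Prop where
  hasDeriv : ∀ t ∈ Icc (0:ℝ) (π/2), HasDerivWithinAt h (h' t) (Icc (0:ℝ) (π/2)) t
  lipschitz : ∃ K : NNReal, LipschitzOnWith K h' (Icc (0:ℝ) (π/2))
  h_zero : h 0 = 0
  h'_pi_div_two : h' (π/2) = 0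

open Filter Topology

/-- At `t = 0` the division by `sin 0 = 0` returns `0`, which is also the limit from the right
when `f 0 = 0` and `f` is differentiable at `0`. -/
noncomputable def wirtingerCalibration (f : ℝ → ℝ) (t : ℝ) : ℝ :=
  -(f t * cos t) ^ 2 / (2 * sin t)

theorem hasDerivAt_wirtingerCalibration {f : ℝ → ℝ} {f' t : ℝ} (hf : HasDerivAt f f' t)
    (ht : sin t ≠ 0) :
    HasDerivAt (wirtingerCalibration f)
      ((f t ^ 2 - (1/2) * f' ^ 2) * cos t + (f' - f t * cos t / sin t) ^ 2 * cos t / 2) t := by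
  refine (((hf.fun_mul (hasDerivAt_cos t)).fun_pow 2).fun_neg.fun_div
    ((hasDerivAt_sin t).const_mul 2) (mul_ne_zero two_ne_zero ht)).congr_deriv ?_
  field_simp
  ring

theorem tendsto_wirtingerCalibration_nhdsGT_zero {f : ℝ → ℝ} {f₀' : ℝ}
    (hf : HasDerivWithinAt f f₀' (Ici 0) 0) (h0 : f 0 = 0) :
    Tendsto (wirtingerCalibration f) (𝓝[>] 0) (𝓝 0) := by
  have hslope : Tendsto (slope f 0) (𝓝[>] 0) (𝓝 f₀') :=
    (hasDerivWithinAt_iff_tendsto_slope' self_notMem_Ioi).1 (hasDerivWithinAt_Ioi_iff_Ici.2 hf)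
  have hsinc : Tendsto sinc (𝓝[>] 0) (𝓝 1) :=
    sinc_zero ▸ continuous_sinc.continuousWithinAt.tendsto
  have hid : Tendsto (fun t : ℝ => t) (𝓝[>] 0) (𝓝 0) := nhdsWithin_le_nhds
  have hcos : Tendsto cos (𝓝[>] 0) (𝓝 1) :=
    cos_zero ▸ continuous_cos.continuousWithinAt.tendsto
  have hlim := (((hslope.mul hcos).pow 2).neg.mul hid).div (hsinc.const_mul 2) (by norm_num)
  rw [show -(f₀' * 1) ^ 2 * 0 / (2 * 1) = (0 : ℝ) by ring] at hlim
  refine hlim.congr' (eventually_nhdsWithin_of_forall fun t (ht : 0 < t) => ?_)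
  rw [Pi.div_apply, wirtingerCalibration, slope_def_field, sinc_of_ne_zero ht.ne', h0, sub_zero,
    sub_zero]
  field_simp

theorem continuousOn_wirtingerCalibration {f : ℝ → ℝ} {f₀' b : ℝ} (hb : b < π)
    (hf : ContinuousOn f (Icc 0 b)) (hf₀ : HasDerivWithinAt f f₀' (Ici 0) 0) (h0 : f 0 = 0) :
    ContinuousOn (wirtingerCalibration f) (Icc 0 b) := by
  intro t ht
  rcases ht.1.eq_or_lt with rfl | ht₀
  · have hG₀ : wirtingerCalibration f 0 = 0 := by simp [wirtingerCalibration, h0]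
    refine (continuousWithinAt_Ioi_iff_Ici.1 ?_).mono Icc_subset_Ici_self
    rw [ContinuousWithinAt, hG₀]
    exact tendsto_wirtingerCalibration_nhdsGT_zero hf₀ h0
  · exact (((hf t ht).mul continuous_cos.continuousWithinAt).pow 2).neg.div
      (continuous_const.mul continuous_sin).continuousWithinAt
      (mul_ne_zero two_ne_zero (sin_pos_of_pos_of_lt_pi ht₀ (ht.2.trans_lt hb)).ne')

theorem integral_sq_sub_half_deriv_sq_mul_cos_nonpos {f f' : ℝ → ℝ} {b : ℝ} (hb₀ : 0 < b)
    (hb : b ≤ π / 2) (hf : ∀ t ∈ Icc 0 b, HasDerivWithinAt f (f' t) (Icc 0 b) t)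
    (hf' : ContinuousOn f' (Icc 0 b)) (h0 : f 0 = 0) :
    ∫ t in 0..b, (f t ^ 2 - (1/2) * f' t ^ 2) * cos t ≤ 0 := by
  have hbπ : b < π := by linarith [pi_pos]
  have hcont : ContinuousOn f (Icc 0 b) := fun t ht => (hf t ht).continuousWithinAt
  have hf₀ : HasDerivWithinAt f (f' 0) (Ici 0) 0 :=
    (hf 0 (left_mem_Icc.2 hb₀.le)).mono_of_mem_nhdsWithin (Icc_mem_nhdsGE hb₀)
  have hderiv (t : ℝ) (ht : t ∈ Ioo 0 b) : HasDerivAt (wirtingerCalibration f)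
      ((f t ^ 2 - (1/2) * f' t ^ 2) * cos t
        + (f' t - f t * cos t / sin t) ^ 2 * cos t / 2) t :=
    hasDerivAt_wirtingerCalibration
      ((hf t (Ioo_subset_Icc_self ht)).hasDerivAt (Icc_mem_nhds ht.1 ht.2))
      (sin_pos_of_pos_of_lt_pi ht.1 (ht.2.trans hbπ)).ne'
  calc ∫ t in 0..b, (f t ^ 2 - (1/2) * f' t ^ 2) * cos t
      ≤ wirtingerCalibration f b - wirtingerCalibration f 0 := by
        refine intervalIntegral.integral_le_sub_of_hasDeriv_right_of_le hb₀.le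
          (continuousOn_wirtingerCalibration hbπ hcont hf₀ h0)
          (fun t ht => (hderiv t ht).hasDerivWithinAt)
          (((hcont.pow 2).sub (continuousOn_const.mul (hf'.pow 2))).mul
            continuous_cos.continuousOn).integrableOn_Icc
          (fun t ht => le_add_of_nonneg_right ?_)
        have : 0 ≤ cos t :=
          cos_nonneg_of_mem_Icc ⟨by linarith [ht.1, pi_pos], by linarith [ht.2]⟩
        positivity
    _ ≤ 0 := by
      have := sin_nonneg_of_nonneg_of_le_pi hb₀.le hbπ.le
      simp only [wirtingerCalibration, h0, sin_zero, zero_mul, mul_zero, div_zero, sub_zero]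
      exact div_nonpos_of_nonpos_of_nonneg (neg_nonpos.2 (sq_nonneg _)) (by positivity)

theorem weighted_wirtinger_inequality (h h' : ℝ → ℝ) (hE : MemE h h') :
    ∫ t in (0:ℝ)..(π/2), (h t ^ 2 - (1/2) * h' t ^ 2) * Real.cos t ≤ 0 := by
  obtain ⟨K, hK⟩ := hE.lipschitz
  exact integral_sq_sub_half_deriv_sq_mul_cos_nonpos (by positivity) le_rfl hE.hasDeriv
    hK.continuousOn hE.h_zero
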